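/- arXiv:1204.3083 — 2 statements merged into one kernel-verified Lean document; each statement's English description precedes it below -/
import Mathlib

section
/- Let C be a finite split category and let I be a J-class of C. Then there exists a set ε of idempotent endomorphisms of C, each belonging to I, such that the sets (Mor(C)∘e) ∩ I for e ∈ ε are pairwise disjoint and their union equals I. -/
/-!
If `s` and `s ≫ v` lie in the same `J`-class of a category with finite endomorphism sets, then
`s = u ≫ s ≫ b` with `b = v ≫ w`, hence `s = uⁿ ≫ s ≫ bⁿ` for all `n`; taking `bⁿ` idempotent gives
`s ≫ bⁿ = s`, so `s` factors through `s ≫ v` and `Mor(C)∘s = Mor(C)∘(s ≫ v)`. Consequently the sets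
`Mor(C)∘x ∩ I`, `x ∈ I`, are the `L`-classes inside `I` and any two of them are equal or disjoint.
Splitness puts an idempotent `s ≫ t` (where `s ≫ t ≫ s = s`) into the `L`-class of each `s`, and
choosing one idempotent per `L`-class gives `ε`.
-/

open CategoryTheory

/-- The set of all morphisms of a category `C`, as a sigma type. -/
def Mor (C : Type*) [Category C] : Type _ := Σ (X Y : C), X ⟶ Y

/-- For a morphism `s : X ⟶ Y`, the set `Mor(C)∘s∘Mor(C) = { v∘s∘u }` (in Lean's
composition order: `u ≫ s ≫ v`). -/
def Jset {C : Type*} [Category C] {X Y : C} (s : X ⟶ Y) : Set (Mor C) :=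
  { m | ∃ (W Z : C) (u : W ⟶ X) (v : Y ⟶ Z), m = ⟨W, Z, u ≫ s ≫ v⟩ }

/-- `Mor(C)∘m∘Mor(C)` for a bundled morphism `m`. -/
def JsetM {C : Type*} [Category C] (m : Mor C) : Set (Mor C) := Jset m.2.2

/-- The `J`-class of a bundled morphism `m`. -/
def JClassM {C : Type*} [Category C] (m : Mor C) : Set (Mor C) :=
  { x | JsetM x = JsetM m }

/-- For a morphism `s : X ⟶ Y`, the set `Mor(C)∘s := { v∘s | v : Y ⟶ Z }` (in Lean's
composition order: `s ≫ v`). -/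
def Lset {C : Type*} [Category C] {X Y : C} (s : X ⟶ Y) : Set (Mor C) :=
  { m | ∃ (Z : C) (v : Y ⟶ Z), m = ⟨X, Z, s ≫ v⟩ }

theorem exists_isIdempotentElem_pow {M : Type*} [Monoid M] [Finite M] (b : M) :
    ∃ n, 0 < n ∧ IsIdempotentElem (b ^ n) := by
  obtain ⟨i, j, hne, hij⟩ := Finite.exists_ne_map_eq_of_infinite fun n : ℕ => b ^ n
  wlog hlt : i < j generalizing i j
  · exact this j i hne.symm hij.symm (hne.symm.lt_of_le (not_lt.1 hlt))
  obtain ⟨p, rfl⟩ := Nat.exists_eq_add_of_lt hlt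
  have hper : ∀ t, b ^ i * b ^ ((p + 1) * t) = b ^ i := by
    intro t
    induction t with
    | zero => simp
    | succ t ih => rw [mul_add, mul_one, pow_add, ← mul_assoc, ih, ← pow_add]; exact hij.symm
  obtain ⟨r, hr⟩ := Nat.exists_eq_add_of_le' (show i ≤ (p + 1) * (i + 1) by nlinarith)
  refine ⟨(p + 1) * (i + 1), by positivity, ?_⟩
  calc b ^ ((p + 1) * (i + 1)) * b ^ ((p + 1) * (i + 1))
      = b ^ r * (b ^ i * b ^ ((p + 1) * (i + 1))) := by rw [hr, pow_add, mul_assoc]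
    _ = b ^ ((p + 1) * (i + 1)) := by rw [hper, ← pow_add, hr]

section

variable {C : Type*} [Category C]

theorem mem_Jset_iff {X Y W Z : C} (s : X ⟶ Y) (f : W ⟶ Z) :
    (⟨W, Z, f⟩ : Mor C) ∈ Jset s ↔ ∃ (u : W ⟶ X) (v : Y ⟶ Z), f = u ≫ s ≫ v := by
  constructor
  · rintro ⟨W', Z', u, v, h⟩
    cases h
    exact ⟨u, v, rfl⟩
  · rintro ⟨u, v, rfl⟩
    exact ⟨W, Z, u, v, rfl⟩

theorem mem_Lset_iff {X Y Z : C} (s : X ⟶ Y) (f : X ⟶ Z) :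
    (⟨X, Z, f⟩ : Mor C) ∈ Lset s ↔ ∃ v : Y ⟶ Z, f = s ≫ v := by
  constructor
  · rintro ⟨Z', v, h⟩
    cases h
    exact ⟨v, rfl⟩
  · rintro ⟨v, rfl⟩
    exact ⟨Z, v, rfl⟩

theorem mem_Lset_self {X Y : C} (s : X ⟶ Y) : (⟨X, Y, s⟩ : Mor C) ∈ Lset s :=
  (mem_Lset_iff s s).2 ⟨𝟙 Y, (Category.comp_id s).symm⟩

theorem Lset_subset_Jset {X Y : C} (s : X ⟶ Y) : Lset s ⊆ Jset s := by
  rintro _ ⟨Z, v, rfl⟩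
  exact (mem_Jset_iff s _).2 ⟨𝟙 X, v, (Category.id_comp _).symm⟩

theorem Lset_subset_of_mem {x y : Mor C} (h : x ∈ Lset y.2.2) : Lset x.2.2 ⊆ Lset y.2.2 := by
  obtain ⟨Z, v, rfl⟩ := h
  rintro _ ⟨W, w, rfl⟩
  exact ⟨W, v ≫ w, by rw [Category.assoc]⟩

theorem JsetM_subset_of_mem {x y : Mor C} (h : x ∈ JsetM y) : JsetM x ⊆ JsetM y := by
  obtain ⟨W, Z, u, v, rfl⟩ := h
  rintro _ ⟨W', Z', u', v', rfl⟩
  exact (mem_Jset_iff _ _).2 ⟨u' ≫ u, v ≫ v', by simp⟩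

theorem JsetM_eq_of_Lset_eq {x y : Mor C} (h : Lset x.2.2 = Lset y.2.2) : JsetM x = JsetM y :=
  (JsetM_subset_of_mem (Lset_subset_Jset _ (h ▸ mem_Lset_self x.2.2))).antisymm
    (JsetM_subset_of_mem (Lset_subset_Jset _ (h ▸ mem_Lset_self y.2.2)))

theorem comp_pow_comp_pow_eq {X Y : C} {s : X ⟶ Y} {u : End X} {b : End Y}
    (h : u ≫ s ≫ b = s) (n : ℕ) : (u ^ n) ≫ s ≫ (b ^ n) = s := by
  induction n with
  | zero => simp
  | succ n ih =>
    rw [pow_succ u, pow_succ' b]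
    simp only [End.mul_def, Category.assoc, reassoc_of% ih, h]

theorem mem_Lset_comp_of_mem_Jset_comp {X Y Z : C} [Finite (Y ⟶ Y)] (s : X ⟶ Y) (v : Y ⟶ Z)
    (h : (⟨X, Y, s⟩ : Mor C) ∈ Jset (s ≫ v)) : (⟨X, Y, s⟩ : Mor C) ∈ Lset (s ≫ v) := by
  obtain ⟨u, w, hs⟩ := (mem_Jset_iff _ _).1 h
  let b : End Y := v ≫ w
  have : Finite (End Y) := inferInstanceAs (Finite (Y ⟶ Y))
  obtain ⟨n, hn, hidem⟩ := exists_isIdempotentElem_pow b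
  have hpow := comp_pow_comp_pow_eq (u := End.of u) (b := b) (by simpa [b] using hs.symm) n
  have hfix : s ≫ b ^ n = s :=
    calc s ≫ b ^ n = ((End.of u ^ n) ≫ s ≫ b ^ n) ≫ b ^ n := by rw [hpow]
      _ = (End.of u ^ n) ≫ s ≫ (b ^ n * b ^ n) := by simp only [End.mul_def, Category.assoc]
      _ = s := by rw [hidem.eq, hpow]
  obtain ⟨k, rfl⟩ := Nat.exists_eq_succ_of_ne_zero hn.ne'
  refine (mem_Lset_iff _ _).2 ⟨w ≫ b ^ k, ?_⟩
  conv_lhs => rw [← hfix]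
  simp only [pow_succ, End.mul_def, b, Category.assoc]

theorem Lset_eq_of_mem_Lset [∀ Y : C, Finite (Y ⟶ Y)] {x z : Mor C} (hJ : JsetM z = JsetM x)
    (hz : z ∈ Lset x.2.2) : Lset z.2.2 = Lset x.2.2 := by
  obtain ⟨X, Y, s⟩ := x
  refine (Lset_subset_of_mem hz).antisymm (Lset_subset_of_mem ?_)
  obtain ⟨Z, v, rfl⟩ := hz
  have hJ : Jset (s ≫ v) = Jset s := hJ
  exact mem_Lset_comp_of_mem_Jset_comp s v (hJ ▸ Lset_subset_Jset s (mem_Lset_self s))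

theorem Lset_comp_eq_of_comp_comp_eq {X Y : C} {s : X ⟶ Y} {t : Y ⟶ X} (h : s ≫ t ≫ s = s) :
    Lset (s ≫ t) = Lset s :=
  (Lset_subset_of_mem (x := ⟨X, X, s ≫ t⟩) ⟨X, t, rfl⟩).antisymm
    (Lset_subset_of_mem (x := ⟨X, Y, s⟩) ⟨Y, s, by rw [Category.assoc, h]⟩)

end

section

variable {C : Type*} [Category C]
  (hsplit : ∀ {X Y : C} (s : X ⟶ Y), ∃ t : Y ⟶ X, s ≫ t ≫ s = s)

noncomputable def splitIdempotent (x : Mor C) : Σ X : C, X ⟶ X :=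
  ⟨x.1, x.2.2 ≫ (hsplit x.2.2).choose⟩

theorem splitIdempotent_idem (x : Mor C) :
    (splitIdempotent hsplit x).2 ≫ (splitIdempotent hsplit x).2 = (splitIdempotent hsplit x).2 := by
  simp [splitIdempotent, reassoc_of% (hsplit _).choose_spec]

theorem Lset_splitIdempotent (x : Mor C) : Lset (splitIdempotent hsplit x).2 = Lset x.2.2 :=
  Lset_comp_eq_of_comp_comp_eq (hsplit _).choose_spec

noncomputable def lClassIdempotent (x : Mor C) : Σ X : C, X ⟶ X :=
  splitIdempotent hsplit (⟦x⟧ : Quotient (Setoid.ker fun y : Mor C => Lset y.2.2)).out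

theorem Lset_lClassIdempotent (x : Mor C) : Lset (lClassIdempotent hsplit x).2 = Lset x.2.2 :=
  (Lset_splitIdempotent hsplit _).trans
    (Setoid.ker_apply_mk_out (f := fun y : Mor C => Lset y.2.2) x)

theorem lClassIdempotent_eq_of_Lset_eq {x y : Mor C} (h : Lset x.2.2 = Lset y.2.2) :
    lClassIdempotent hsplit x = lClassIdempotent hsplit y := by
  rw [lClassIdempotent, lClassIdempotent, Quotient.sound (s := Setoid.ker _) h]

end

/-- In a finite split category, for every `J`-class `I` there is a set
`ε` of idempotent endomorphisms, all lying in `I`, such that the sets `(Mor(C)∘e) ∩ I`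
for `e ∈ ε` are pairwise disjoint with union `I`. -/
theorem statement9 {C : Type*} [Category C] [Finite C]
    [∀ X Y : C, Finite (X ⟶ Y)]
    (hsplit : ∀ {X Y : C} (s : X ⟶ Y), ∃ t : Y ⟶ X, s ≫ t ≫ s = s)
    (I : Set (Mor C)) (m : Mor C) (hI : I = JClassM m) :
    ∃ ε : Set (Σ X : C, X ⟶ X),
      (∀ e ∈ ε, e.2 ≫ e.2 = e.2 ∧ (⟨e.1, e.1, e.2⟩ : Mor C) ∈ I) ∧
      (ε.PairwiseDisjoint fun e => Lset e.2 ∩ I) ∧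
      (⋃ e ∈ ε, Lset e.2 ∩ I) = I := by
  subst hI
  refine ⟨lClassIdempotent hsplit '' JClassM m, ?_, ?_, ?_⟩
  · rintro _ ⟨x, hx, rfl⟩
    exact ⟨splitIdempotent_idem hsplit _,
      (JsetM_eq_of_Lset_eq (Lset_lClassIdempotent hsplit x)).trans hx⟩
  · rintro _ ⟨x, hx, rfl⟩ _ ⟨y, hy, rfl⟩ hne
    refine Set.disjoint_left.2 fun z ⟨hzx, hz⟩ ⟨hzy, _⟩ => hne ?_
    rw [Lset_lClassIdempotent] at hzx hzy
    exact lClassIdempotent_eq_of_Lset_eq hsplit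
      ((Lset_eq_of_mem_Lset (hz.trans hx.symm) hzx).symm.trans
        (Lset_eq_of_mem_Lset (hz.trans hy.symm) hzy))
  · refine (Set.iUnion₂_subset fun _ _ => Set.inter_subset_right).antisymm fun x hx => ?_
    refine Set.mem_iUnion₂.2 ⟨_, Set.mem_image_of_mem _ hx, ?_, hx⟩
    rw [Lset_lClassIdempotent]
    exact mem_Lset_self x.2.2
end

section
/- Let M be a finite monoid, k a field, and A := MonoidAlgebra k M. Let e, f ∈ M be idempotents and let s, t ∈ M satisfy s = e·s·f, t = f·t·e, e = s·t, and f = t·s. Then right multiplication by s defines an isomorphism of left A-modules A·e → A·f whose inverse is right multiplication by t, and this isomorphism maps A·kJ_e onto A·kJ_f, where kJ_e and kJ_f are the k-linear spans in A of J_e := eMe ∖ Γ_e and J_f := fMf ∖ Γ_f respectively. In particular, (A·e)/(A·kJ_e) ≅ (A·f)/(A·kJ_f) as left A-modules. -/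
/-- The submonoid `eMe = { e·a·e : a ∈ M }` of a monoid `M`, for an idempotent `e`. -/
def eMe {M : Type*} [Monoid M] (e : M) : Set M := { a : M | ∃ c : M, a = e * c * e }

/-- The group `Γ_e` of invertible elements of the monoid `eMe` (identity element `e`). -/
def unitSet {M : Type*} [Monoid M] (e : M) : Set M :=
  { a : M | a ∈ eMe e ∧ ∃ b ∈ eMe e, a * b = e ∧ b * a = e }

/-- The set `J_e := eMe ∖ Γ_e`. -/
def Je {M : Type*} [Monoid M] (e : M) : Set M := eMe e \ unitSet e

/-! Conjugation `a ↦ t·a·s` is a monoid isomorphism `eMe ≅ fMf` with inverse `b ↦ s·b·t`, so it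
maps `J_e` into `J_f` and back. Since `a·s = s·(t·a·s)` for `a ∈ eMe`, right multiplication by `s`
sends the generators of `A·kJ_e` into `A·kJ_f`; conversely `b = t·(s·b·t)·s` for `b ∈ fMf`.
Right multiplications by `s` and `t` are inverse isomorphisms `A·e ≅ A·f` because `st = e` and
`ts = f` act as the identity there, and the quotient isomorphism follows. -/

section Monoid

variable {M : Type*} [Monoid M] {e f s t : M}

lemma idem_mul_of_mem_eMe (he : e * e = e) {a : M} (ha : a ∈ eMe e) : e * a = a := by
  obtain ⟨c, rfl⟩ := ha
  rw [← mul_assoc, ← mul_assoc, he]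

lemma mul_idem_of_mem_eMe (he : e * e = e) {a : M} (ha : a ∈ eMe e) : a * e = a := by
  obtain ⟨c, rfl⟩ := ha
  rw [mul_assoc, he]

lemma idem_mul_of_eq_mul_mul (he : e * e = e) (hs : s = e * s * f) : e * s = s := by
  rw [hs, ← mul_assoc, ← mul_assoc, he]

lemma mul_idem_of_eq_mul_mul (hf : f * f = f) (hs : s = e * s * f) : s * f = s := by
  rw [hs, mul_assoc, hf]

lemma conj_mem_eMe (hs : e * s = s) (ht : t * e = t) (b : M) : s * b * t ∈ eMe e :=
  ⟨s * b * t, by simp only [mul_assoc, ht]; rw [← mul_assoc e, hs]⟩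

lemma conj_mem_unitSet (he : e * e = e) (hf : f * f = f) (hs : s = e * s * f)
    (ht : t = f * t * e) (hst : e = s * t) (hts : f = t * s) {b : M} (hb : b ∈ unitSet f) :
    s * b * t ∈ unitSet e := by
  obtain ⟨hbf, b', hb'f, hbb', hb'b⟩ := hb
  have hes := idem_mul_of_eq_mul_mul he hs
  have hte := mul_idem_of_eq_mul_mul he ht
  have key : ∀ x y : M, x ∈ eMe f → x * y = f → s * x * t * (s * y * t) = e := by
    intro x y hx hxy
    calc s * x * t * (s * y * t) = s * (x * (t * s)) * y * t := by simp only [mul_assoc]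
      _ = s * t := by
        rw [← hts, mul_idem_of_mem_eMe hf hx, mul_assoc s, hxy, mul_idem_of_eq_mul_mul hf hs]
      _ = e := hst.symm
  exact ⟨conj_mem_eMe hes hte b, s * b' * t, conj_mem_eMe hes hte b', key b b' hbf hbb',
    key b' b hb'f hb'b⟩

lemma conj_mem_Je (he : e * e = e) (hf : f * f = f) (hs : s = e * s * f)
    (ht : t = f * t * e) (hst : e = s * t) (hts : f = t * s) {a : M} (ha : a ∈ Je e) :
    t * a * s ∈ Je f := by
  obtain ⟨hae, ha_unit⟩ := ha
  refine ⟨conj_mem_eMe (idem_mul_of_eq_mul_mul hf ht) (mul_idem_of_eq_mul_mul hf hs) a,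
    fun h => ha_unit ?_⟩
  have hconj : s * (t * a * s) * t = a := by
    calc s * (t * a * s) * t = (s * t) * a * (s * t) := by simp only [mul_assoc]
      _ = a := by rw [← hst, idem_mul_of_mem_eMe he hae, mul_idem_of_mem_eMe he hae]
  exact hconj ▸ conj_mem_unitSet he hf hs ht hst hts h

end Monoid

section Semiring

open Submodule

variable {R : Type*} [Semiring R] {e f s t : R}

lemma mul_mem_span_singleton_mul_swap {x : R} (hx : x ∈ span R {s * t}) :
    x * s ∈ span R {t * s} := by
  obtain ⟨a, rfl⟩ := mem_span_singleton.mp hx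
  exact mem_span_singleton.mpr ⟨a * s, by simp only [smul_eq_mul, mul_assoc]⟩

lemma mem_span_singleton_iff_mul_eq_self (he : IsIdempotentElem e) {x : R} :
    x ∈ span R {e} ↔ x * e = x := by
  refine ⟨fun hx => ?_, fun hx => mem_span_singleton.mpr ⟨x, hx⟩⟩
  obtain ⟨a, rfl⟩ := mem_span_singleton.mp hx
  rw [smul_eq_mul, mul_assoc, he.eq]

def spanSingletonMulEquiv (he : IsIdempotentElem e) (hf : IsIdempotentElem f) (hst : s * t = e)
    (hts : t * s = f) : span R {e} ≃ₗ[R] span R {f} :=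
  LinearEquiv.ofLinearMap
    ((LinearMap.toSpanSingleton R R s).restrict fun _ hx =>
      hts ▸ mul_mem_span_singleton_mul_swap (hst ▸ hx))
    ((LinearMap.toSpanSingleton R R t).restrict fun _ hx =>
      hst ▸ mul_mem_span_singleton_mul_swap (hts ▸ hx))
    (by
      ext ⟨y, hy⟩
      simp [mul_assoc, hts, (mem_span_singleton_iff_mul_eq_self hf).mp hy])
    (by
      ext ⟨x, hx⟩
      simp [mul_assoc, hst, (mem_span_singleton_iff_mul_eq_self he).mp hx])

end Semiring

section Ring

open Submodule

variable {R : Type*} [Ring R] {e f s t : R}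

lemma map_comap_subtype_spanSingletonMulEquiv (he : IsIdempotentElem e)
    (hf : IsIdempotentElem f) (hst : s * t = e) (hts : t * s = f) {K L : Submodule R R}
    (hK : K ≤ span R {e}) (hKL : K.map (LinearMap.toSpanSingleton R R s) = L) :
    (K.comap (span R {e}).subtype).map (spanSingletonMulEquiv he hf hst hts).toLinearMap =
      L.comap (span R {f}).subtype := by
  have hcomm : (span R {f}).subtype ∘ₗ (spanSingletonMulEquiv he hf hst hts).toLinearMap =
      LinearMap.toSpanSingleton R R s ∘ₗ (span R {e}).subtype := rfl
  have himage :
      ((K.comap (span R {e}).subtype).map (spanSingletonMulEquiv he hf hst hts).toLinearMap).map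
        (span R {f}).subtype = L := by
    rw [← map_comp, hcomm, map_comp, map_comap_subtype, inf_eq_right.mpr hK, hKL]
  apply map_injective_of_injective (span R {f}).injective_subtype
  rw [himage, map_comap_subtype, inf_eq_right.mpr (himage ▸ map_subtype_le _ _)]

end Ring

section MonoidAlgebra

open Submodule MonoidAlgebra

variable {M : Type*} [Monoid M] {k : Type*} [Semiring k] {e f s t : M}

lemma span_of_Je_le (he : e * e = e) :
    span (MonoidAlgebra k M) (of k M '' Je e) ≤ span (MonoidAlgebra k M) {of k M e} := by
  have he' : IsIdempotentElem (of k M e) := IsIdempotentElem.map he (of k M)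
  rw [span_le]
  rintro _ ⟨a, ha, rfl⟩
  exact (mem_span_singleton_iff_mul_eq_self he').mpr
    (by rw [← map_mul, mul_idem_of_mem_eMe he ha.1])

lemma map_span_of_Je (he : e * e = e) (hf : f * f = f) (hs : s = e * s * f)
    (ht : t = f * t * e) (hst : e = s * t) (hts : f = t * s) :
    (span (MonoidAlgebra k M) (of k M '' Je e)).map
        (LinearMap.toSpanSingleton (MonoidAlgebra k M) (MonoidAlgebra k M) (of k M s)) =
      span (MonoidAlgebra k M) (of k M '' Je f) := by
  rw [map_span, ← Set.image_comp]
  apply le_antisymm <;> rw [span_le]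
  · rintro _ ⟨a, ha, rfl⟩
    have has : a * s = s * (t * a * s) := by
      simp only [← mul_assoc]
      rw [← hst, idem_mul_of_mem_eMe he ha.1]
    show of k M a * of k M s ∈ _
    rw [← map_mul, has, map_mul]
    exact smul_mem _ _ (subset_span ⟨_, conj_mem_Je he hf hs ht hst hts ha, rfl⟩)
  · rintro _ ⟨b, hb, rfl⟩
    have hbt : b = t * (s * b * t * s) := by
      calc b = (t * s) * b * (t * s) := by
            rw [← hts, idem_mul_of_mem_eMe hf hb.1, mul_idem_of_mem_eMe hf hb.1]
        _ = t * (s * b * t * s) := by simp only [mul_assoc]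
    rw [hbt, map_mul, map_mul]
    exact smul_mem _ _ (subset_span ⟨_, conj_mem_Je hf he ht hs hts hst hb, rfl⟩)

end MonoidAlgebra

theorem statement17_general {M : Type*} [Monoid M]
    {k : Type*} [Field k]
    (e f s t : M) (he : e * e = e) (hf : f * f = f)
    (hs : s = e * s * f) (ht : t = f * t * e) (hst : e = s * t) (hts : f = t * s) :
    ∀ Ae Af Ke Kf : Submodule (MonoidAlgebra k M) (MonoidAlgebra k M),
      Ae = Submodule.span (MonoidAlgebra k M) {MonoidAlgebra.of k M e} →
      Af = Submodule.span (MonoidAlgebra k M) {MonoidAlgebra.of k M f} →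
      Ke = Submodule.span (MonoidAlgebra k M) (⇑(MonoidAlgebra.of k M) '' Je e) →
      Kf = Submodule.span (MonoidAlgebra k M) (⇑(MonoidAlgebra.of k M) '' Je f) →
      (∀ x ∈ Ae, x * MonoidAlgebra.of k M s ∈ Af) ∧
      (∀ y ∈ Af, y * MonoidAlgebra.of k M t ∈ Ae) ∧
      (∀ x ∈ Ae, x * MonoidAlgebra.of k M s * MonoidAlgebra.of k M t = x) ∧
      (∀ y ∈ Af, y * MonoidAlgebra.of k M t * MonoidAlgebra.of k M s = y) ∧
      (fun x : MonoidAlgebra k M => x * MonoidAlgebra.of k M s) '' (Ke : Set _) =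
        (Kf : Set _) ∧
      Nonempty
        ((↥Ae ⧸ Submodule.comap Ae.subtype Ke) ≃ₗ[MonoidAlgebra k M]
          (↥Af ⧸ Submodule.comap Af.subtype Kf)) := by
  rintro _ _ _ _ rfl rfl rfl rfl
  set φ := MonoidAlgebra.of k M
  have he' : IsIdempotentElem (φ e) := IsIdempotentElem.map he φ
  have hf' : IsIdempotentElem (φ f) := IsIdempotentElem.map hf φ
  have hst' : φ s * φ t = φ e := by rw [hst, map_mul]
  have hts' : φ t * φ s = φ f := by rw [hts, map_mul]
  have hmap := map_span_of_Je (k := k) he hf hs ht hst hts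
  refine ⟨fun x hx => hts' ▸ mul_mem_span_singleton_mul_swap (hst' ▸ hx),
    fun y hy => hst' ▸ mul_mem_span_singleton_mul_swap (hts' ▸ hy),
    fun x hx => by rw [mul_assoc, hst', (mem_span_singleton_iff_mul_eq_self he').mp hx],
    fun y hy => by rw [mul_assoc, hts', (mem_span_singleton_iff_mul_eq_self hf').mp hy],
    by rw [← hmap, Submodule.map_coe]; rfl,
    ⟨Submodule.Quotient.equiv _ _ (spanSingletonMulEquiv he' hf' hst' hts')
      (map_comap_subtype_spanSingletonMulEquiv he' hf' hst' hts' (span_of_Je_le he) hmap)⟩⟩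

/-- Let `M` be a finite monoid, `k` a field, `A := MonoidAlgebra k M`.
Let `e, f ∈ M` be idempotents and `s, t ∈ M` with `s = e·s·f`, `t = f·t·e`, `e = s·t`
and `f = t·s`.  Then right multiplication by `s` defines an isomorphism of left
`A`-modules `A·e → A·f` with inverse given by right multiplication by `t`, it maps
`A·kJ_e` onto `A·kJ_f`, and in particular `(A·e)/(A·kJ_e) ≅ (A·f)/(A·kJ_f)` as left
`A`-modules. -/
theorem statement17 {M : Type*} [Monoid M] [Finite M]
    {k : Type*} [Field k]
    (e f s t : M) (he : e * e = e) (hf : f * f = f)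
    (hs : s = e * s * f) (ht : t = f * t * e) (hst : e = s * t) (hts : f = t * s) :
    ∀ Ae Af Ke Kf : Submodule (MonoidAlgebra k M) (MonoidAlgebra k M),
      Ae = Submodule.span (MonoidAlgebra k M) {MonoidAlgebra.of k M e} →
      Af = Submodule.span (MonoidAlgebra k M) {MonoidAlgebra.of k M f} →
      Ke = Submodule.span (MonoidAlgebra k M) (⇑(MonoidAlgebra.of k M) '' Je e) →
      Kf = Submodule.span (MonoidAlgebra k M) (⇑(MonoidAlgebra.of k M) '' Je f) →
      (∀ x ∈ Ae, x * MonoidAlgebra.of k M s ∈ Af) ∧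
      (∀ y ∈ Af, y * MonoidAlgebra.of k M t ∈ Ae) ∧
      (∀ x ∈ Ae, x * MonoidAlgebra.of k M s * MonoidAlgebra.of k M t = x) ∧
      (∀ y ∈ Af, y * MonoidAlgebra.of k M t * MonoidAlgebra.of k M s = y) ∧
      (fun x : MonoidAlgebra k M => x * MonoidAlgebra.of k M s) '' (Ke : Set _) =
        (Kf : Set _) ∧
      Nonempty
        ((↥Ae ⧸ Submodule.comap Ae.subtype Ke) ≃ₗ[MonoidAlgebra k M]
          (↥Af ⧸ Submodule.comap Af.subtype Kf)) :=
  statement17_general e f s t he hf hs ht hst hts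
end
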